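/- arXiv:1401.4728 — 2 statements merged into one kernel-verified Lean document; each statement's English description precedes it below -/
import Mathlib

section
/- Let k be a formally real pythagorean field such that the group k^×/(k^×)² is finite of order 2^n. Then the number x(k) of orderings of k satisfies n ≤ x(k) ≤ 2^{n−1}. -/
/-!
An ordering `P` of `k` is determined by its sign character on the square-class group
`G = kˣ/(kˣ)²`, and this character sends `-1` to `-1`. Since `G` is an elementary abelian
2-group of order `2ⁿ`, it has `2ⁿ` characters to `{±1}`, exactly half of which send `-1 ≠ 1`
to `-1`; hence `x(k) ≤ 2ⁿ⁻¹`. Conversely, by Artin's theorem an element that is positive at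
every ordering is a sum of squares, hence a square since `k` is pythagorean. So the sign characters
of the orderings separate the points of `G`, which therefore embeds into `{±1}^x(k)`, and
`2ⁿ ≤ 2^x(k)`.
-/

open scoped Pointwise

def IsFieldOrdering {k : Type} [Field k] (P : Set k) : Prop :=
  (∀ a ∈ P, ∀ b ∈ P, a + b ∈ P) ∧ (∀ a ∈ P, ∀ b ∈ P, a * b ∈ P) ∧
    P ∩ (-P) = ∅ ∧ P ∪ (-P) = {0}ᶜ

namespace RingPreordering

section CommRing

variable {R : Type*} [CommRing R]

def sumSq (h : ¬ IsSumSq (-1 : R)) : RingPreordering R where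
  toSubsemiring := Subsemiring.sumSq R
  mem_of_isSquare' hx := Subsemiring.mem_sumSq.2 hx.isSumSq
  neg_one_notMem' := by simpa using h

@[simp]
theorem mem_sumSq {h : ¬ IsSumSq (-1 : R)} {x : R} : x ∈ sumSq h ↔ IsSumSq x :=
  Subsemiring.mem_sumSq

theorem bddAbove_of_isChain {c : Set (RingPreordering R)} (hc : IsChain (· ≤ ·) c)
    (hne : c.Nonempty) : BddAbove c := by
  have hdir : DirectedOn (· ≤ ·) (toSubsemiring '' c) :=
    (hc.image_of_map_rel _ _ _ fun _ _ h => toSubsemiring_mono h).directedOn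
  obtain ⟨P₀, hP₀⟩ := hne
  have mem_sSup {x : R} : x ∈ sSup (toSubsemiring '' c) ↔ ∃ P ∈ c, x ∈ P := by
    simp [Subsemiring.mem_sSup_of_directedOn ⟨_, Set.mem_image_of_mem _ hP₀⟩ hdir]
  refine ⟨{ toSubsemiring := sSup (toSubsemiring '' c)
            mem_of_isSquare' := fun hx => mem_sSup.2 ⟨P₀, hP₀, P₀.mem_of_isSquare hx⟩
            neg_one_notMem' := fun h => ?_ },
    fun P hP _ hx => mem_sSup.2 ⟨P, hP, hx⟩⟩
  obtain ⟨P, -, hP⟩ := mem_sSup.1 h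
  exact P.neg_one_notMem hP

theorem exists_le_isMax (P : RingPreordering R) : ∃ Q, P ≤ Q ∧ IsMax Q :=
  zorn_le_nonempty_Ici₀ P (fun _ _ hc y hy => bddAbove_of_isChain hc ⟨y, hy⟩) P le_rfl

end CommRing

variable {F : Type*} [Field F]

def adjoin (P : RingPreordering F) {a : F} (ha : -a ∉ P) : RingPreordering F :=
  mk' {x | ∃ s ∈ P, ∃ t ∈ P, x = s + a * t}
    (by
      rintro _ _ ⟨s, hs, t, ht, rfl⟩ ⟨s', hs', t', ht', rfl⟩
      exact ⟨s + s', add_mem hs hs', t + t', add_mem ht ht', by ring⟩)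
    (by
      rintro _ _ ⟨s, hs, t, ht, rfl⟩ ⟨s', hs', t', ht', rfl⟩
      exact ⟨s * s' + a ^ 2 * (t * t'), add_mem (mul_mem hs hs') (mul_mem (P.pow_two_mem a)
        (mul_mem ht ht')), s * t' + s' * t, add_mem (mul_mem hs ht') (mul_mem hs' ht), by ring⟩)
    (fun x => ⟨x * x, P.mul_self_mem x, 0, zero_mem P, by ring⟩)
    (by
      rintro ⟨s, hs, t, ht, hst⟩
      rcases eq_or_ne t 0 with rfl | ht0
      · exact P.neg_one_notMem (by simpa [hst] using hs)
      · refine ha ?_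
        have : -a = (1 + s) * t⁻¹ := by
          rw [eq_mul_inv_iff_mul_eq₀ ht0]; linear_combination hst
        exact this ▸ mul_mem (add_mem (one_mem P) hs) (inv_mem ht))

theorem le_adjoin (P : RingPreordering F) {a : F} (ha : -a ∉ P) : P ≤ P.adjoin ha :=
  fun s hs => ⟨s, hs, 0, zero_mem P, by ring⟩

theorem mem_adjoin_self (P : RingPreordering F) {a : F} (ha : -a ∉ P) : a ∈ P.adjoin ha :=
  ⟨0, zero_mem P, 1, one_mem P, by ring⟩

theorem hasMemOrNegMem_of_isMax {P : RingPreordering F} (hP : IsMax P) : HasMemOrNegMem P :=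
  ⟨fun _ => or_iff_not_imp_right.2 fun ha =>
    hP.eq_of_le (P.le_adjoin ha) ▸ P.mem_adjoin_self ha⟩

-- Mathlib's preorderings are cones of nonnegative elements, `IsFieldOrdering` asks for positive
-- cones.
theorem isFieldOrdering_diff_zero {k : Type} [Field k] (P : RingPreordering k)
    [HasMemOrNegMem P] : IsFieldOrdering ((P : Set k) \ {0}) := by
  refine ⟨?_, ?_, ?_, ?_⟩
  · rintro a ⟨ha, ha0⟩ b ⟨hb, -⟩
    refine ⟨add_mem ha hb, fun hab => ha0 (P.eq_zero_of_mem_of_neg_mem ha ?_)⟩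
    rwa [neg_eq_of_add_eq_zero_right hab]
  · rintro a ⟨ha, ha0⟩ b ⟨hb, hb0⟩
    exact ⟨mul_mem ha hb, mul_ne_zero ha0 hb0⟩
  · refine Set.eq_empty_iff_forall_notMem.2 ?_
    rintro x ⟨⟨hx, hx0⟩, hnx, -⟩
    exact hx0 (P.eq_zero_of_mem_of_neg_mem hx hnx)
  · ext x
    rcases eq_or_ne x 0 with rfl | hx0
    · simp
    · simpa [hx0] using mem_or_neg_mem P x

end RingPreordering

abbrev SquareClass (k : Type*) [Field k] := kˣ ⧸ (powMonoidHom 2 : kˣ →* kˣ).range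

namespace SquareClass

variable {k : Type*} [Field k]

theorem sq_eq_one (g : SquareClass k) : g ^ 2 = 1 := by
  induction g using QuotientGroup.induction_on with
  | H u => exact (QuotientGroup.eq_one_iff _).2 ⟨u, rfl⟩

theorem mk_eq_one_iff (u : kˣ) : (u : SquareClass k) = 1 ↔ IsSquare (u : k) := by
  rw [QuotientGroup.eq_one_iff]
  constructor
  · rintro ⟨v, rfl⟩
    exact ⟨v, by simp [sq]⟩
  · rintro ⟨r, hr⟩
    have hr0 : r ≠ 0 := by rintro rfl; simp at hr
    exact ⟨Units.mk0 r hr0, Units.ext (by simp [hr, sq])⟩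

theorem mk_neg_one_ne_one (hreal : ¬ IsSumSq (-1 : k)) : ((-1 : kˣ) : SquareClass k) ≠ 1 := by
  rw [Ne, mk_eq_one_iff]
  exact fun h => hreal (by simpa using h.isSumSq)

end SquareClass

namespace IsFieldOrdering

variable {k : Type} [Field k] {P : Set k}

theorem zero_notMem (hP : IsFieldOrdering P) : (0 : k) ∉ P :=
  fun h => (hP.2.2.2.subset (Or.inl h) : (0 : k) ∈ ({0}ᶜ : Set k)) rfl

theorem mem_or_neg_mem (hP : IsFieldOrdering P) {x : k} (hx : x ≠ 0) : x ∈ P ∨ -x ∈ P :=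
  hP.2.2.2.symm.subset hx

theorem neg_notMem (hP : IsFieldOrdering P) {x : k} (hx : x ∈ P) : -x ∉ P :=
  fun h => Set.eq_empty_iff_forall_notMem.1 hP.2.2.1 x ⟨hx, h⟩

theorem mul_mem_iff (hP : IsFieldOrdering P) {x y : k} (hx : x ≠ 0) (hy : y ≠ 0) :
    x * y ∈ P ↔ (x ∈ P ↔ y ∈ P) := by
  have hmul := hP.2.1
  rcases hP.mem_or_neg_mem hx with hx' | hx' <;> rcases hP.mem_or_neg_mem hy with hy' | hy'
  · exact iff_of_true (hmul _ hx' _ hy') (iff_of_true hx' hy')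
  · exact iff_of_false (fun h => hP.neg_notMem h (by simpa using hmul _ hx' _ hy'))
      fun h => hP.neg_notMem (h.1 hx') hy'
  · exact iff_of_false (fun h => hP.neg_notMem h (by simpa using hmul _ hx' _ hy'))
      fun h => hP.neg_notMem (h.2 hy') hx'
  · exact iff_of_true (by simpa using hmul _ hx' _ hy')
      (iff_of_false (fun h => hP.neg_notMem h hx') fun h => hP.neg_notMem h hy')

theorem one_mem (hP : IsFieldOrdering P) : (1 : k) ∈ P := by
  simpa using (hP.mul_mem_iff one_ne_zero one_ne_zero).2 Iff.rfl

open Classical in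
noncomputable def sign (hP : IsFieldOrdering P) : kˣ →* ℤˣ where
  toFun u := if (u : k) ∈ P then 1 else -1
  map_one' := by simp [hP.one_mem]
  map_mul' u v := by
    simp only [Units.val_mul, hP.mul_mem_iff u.ne_zero v.ne_zero]
    by_cases hu : (u : k) ∈ P <;> by_cases hv : (v : k) ∈ P <;> simp [hu, hv]

theorem sign_eq_one_iff (hP : IsFieldOrdering P) {u : kˣ} : hP.sign u = 1 ↔ (u : k) ∈ P := by
  simp [sign]

theorem sign_eq_neg_one_iff (hP : IsFieldOrdering P) {u : kˣ} :
    hP.sign u = -1 ↔ (u : k) ∉ P := by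
  simp [sign]

noncomputable def squareClassChar (hP : IsFieldOrdering P) : SquareClass k →* ℤˣ :=
  QuotientGroup.lift _ hP.sign (by
    rintro _ ⟨u, rfl⟩
    simp [Int.units_sq])

@[simp]
theorem squareClassChar_mk (hP : IsFieldOrdering P) (u : kˣ) :
    hP.squareClassChar u = hP.sign u :=
  rfl

theorem squareClassChar_neg_one (hP : IsFieldOrdering P) : hP.squareClassChar (-1 : kˣ) = -1 := by
  simpa [sign_eq_neg_one_iff] using hP.neg_notMem hP.one_mem

theorem eq_of_squareClassChar_eq {Q : Set k} (hP : IsFieldOrdering P) (hQ : IsFieldOrdering Q)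
    (h : hP.squareClassChar = hQ.squareClassChar) : P = Q := by
  ext x
  rcases eq_or_ne x 0 with rfl | hx
  · exact iff_of_false hP.zero_notMem hQ.zero_notMem
  · have := DFunLike.congr_fun h ((Units.mk0 x hx : kˣ) : SquareClass k)
    simp only [squareClassChar_mk] at this
    rw [← Units.val_mk0 hx, ← hP.sign_eq_one_iff, ← hQ.sign_eq_one_iff, this]

end IsFieldOrdering

theorem IsSumSq.isSquare {R : Type*} [CommSemiring R]
    (hpyth : ∀ a b : R, ∃ c : R, a ^ 2 + b ^ 2 = c ^ 2) {x : R} (hx : IsSumSq x) :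
    IsSquare x := by
  induction hx with
  | zero => exact ⟨0, by simp⟩
  | sq_add a _ ih =>
    obtain ⟨b, rfl⟩ := ih
    obtain ⟨c, hc⟩ := hpyth a b
    exact ⟨c, by simpa [sq] using hc⟩

theorem exists_isFieldOrdering_notMem {k : Type} [Field k] (hreal : ¬ IsSumSq (-1 : k))
    {a : k} (ha : a ≠ 0) (hna : ¬ IsSumSq a) : ∃ P : Set k, IsFieldOrdering P ∧ a ∉ P := by
  have hna' : -(-a) ∉ RingPreordering.sumSq hreal := by simpa using hna
  obtain ⟨Q, hQ, hmax⟩ := ((RingPreordering.sumSq hreal).adjoin hna').exists_le_isMax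
  have := RingPreordering.hasMemOrNegMem_of_isMax hmax
  exact ⟨_, Q.isFieldOrdering_diff_zero, fun h => ha (Q.eq_zero_of_mem_of_neg_mem h.1
    (hQ (RingPreordering.mem_adjoin_self _ hna')))⟩

theorem SquareClass.eq_one_of_forall_squareClassChar_eq_one {k : Type} [Field k]
    (hreal : ¬ IsSumSq (-1 : k)) (hpyth : ∀ a b : k, ∃ c : k, a ^ 2 + b ^ 2 = c ^ 2)
    {g : SquareClass k} (h : ∀ (P : Set k) (hP : IsFieldOrdering P), hP.squareClassChar g = 1) :
    g = 1 := by
  induction g using QuotientGroup.induction_on with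
  | H u =>
    by_contra hu
    have hsq : ¬ IsSumSq (u : k) := fun hs => hu ((mk_eq_one_iff u).2 (hs.isSquare hpyth))
    obtain ⟨P, hP, huP⟩ := exists_isFieldOrdering_notMem hreal u.ne_zero hsq
    exact huP (hP.sign_eq_one_iff.1 (h P hP))

instance Int.hasEnoughRootsOfUnity_two : HasEnoughRootsOfUnity ℤ 2 :=
  ⟨⟨-1, IsPrimitiveRoot.neg_one 0 (by norm_num)⟩, rootsOfUnity.isCyclic ℤ 2⟩

section ExponentTwo

variable {G : Type*} [CommGroup G]

theorem hasEnoughRootsOfUnity_int_of_sq_eq_one (hG : ∀ g : G, g ^ 2 = 1) :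
    HasEnoughRootsOfUnity ℤ (Monoid.exponent G) :=
  HasEnoughRootsOfUnity.of_dvd ℤ (Monoid.exponent_dvd_of_forall_pow_eq_one hG)

theorem two_mul_card_monoidHom_apply_eq_neg_one [Finite G] (hG : ∀ g : G, g ^ 2 = 1) {g : G}
    (hg : g ≠ 1) :
    2 * Nat.card {φ : G →* ℤˣ // φ g = -1} = Nat.card G := by
  have := hasEnoughRootsOfUnity_int_of_sq_eq_one hG
  obtain ⟨φ₀, hφ₀⟩ := CommGroup.exists_apply_ne_one_of_hasEnoughRootsOfUnity G ℤ hg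
  replace hφ₀ : φ₀ g = -1 := (Int.units_eq_one_or _).resolve_left hφ₀
  let ev : (G →* ℤˣ) →* ℤˣ := MonoidHom.eval g
  have hev : Function.Surjective ev := fun ε => by
    rcases Int.units_eq_one_or ε with rfl | rfl
    exacts [⟨1, rfl⟩, ⟨φ₀, hφ₀⟩]
  have hfiber : {φ : G →* ℤˣ // φ g = -1} ≃ ev.ker :=
    (Equiv.subtypeEquivRight fun φ => by simp [ev, hφ₀]).trans (ev.fiberEquivKer φ₀)
  rw [Nat.card_congr hfiber, ← CommGroup.card_monoidHom_of_hasEnoughRootsOfUnity G ℤ,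
    ← ev.ker.card_mul_index, Subgroup.index_ker, MonoidHom.range_eq_top.2 hev, Subgroup.card_top,
    Nat.card_eq_fintype_card (α := ℤˣ), Fintype.card_units_int, mul_comm]

end ExponentTwo

section Counting

variable {k : Type} [Field k]

theorem finite_isFieldOrdering [Finite (SquareClass k)] :
    Finite {P : Set k // IsFieldOrdering P} :=
  Finite.of_injective (fun P => ⇑P.2.squareClassChar) fun P Q h =>
    Subtype.ext (P.2.eq_of_squareClassChar_eq Q.2 (DFunLike.coe_injective h))

theorem two_mul_card_isFieldOrdering_le [Finite (SquareClass k)] (hreal : ¬ IsSumSq (-1 : k)) :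
    2 * Nat.card {P : Set k // IsFieldOrdering P} ≤ Nat.card (SquareClass k) := by
  have := hasEnoughRootsOfUnity_int_of_sq_eq_one (G := SquareClass k) SquareClass.sq_eq_one
  rw [← two_mul_card_monoidHom_apply_eq_neg_one SquareClass.sq_eq_one
    (SquareClass.mk_neg_one_ne_one hreal)]
  refine Nat.mul_le_mul_left 2 (Nat.card_le_card_of_injective
    (fun P => ⟨P.2.squareClassChar, P.2.squareClassChar_neg_one⟩) fun P Q h => ?_)
  exact Subtype.ext (P.2.eq_of_squareClassChar_eq Q.2 (congrArg Subtype.val h))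

theorem card_squareClass_le_two_pow_card_isFieldOrdering [Finite (SquareClass k)]
    (hreal : ¬ IsSumSq (-1 : k)) (hpyth : ∀ a b : k, ∃ c : k, a ^ 2 + b ^ 2 = c ^ 2) :
    Nat.card (SquareClass k) ≤ 2 ^ Nat.card {P : Set k // IsFieldOrdering P} := by
  have := finite_isFieldOrdering (k := k)
  let ψ : SquareClass k →* ({P : Set k // IsFieldOrdering P} → ℤˣ) :=
    MonoidHom.pi fun P => P.2.squareClassChar
  have hψ : Function.Injective ψ := (injective_iff_map_eq_one ψ).2 fun g hg =>
    SquareClass.eq_one_of_forall_squareClassChar_eq_one hreal hpyth fun P hP =>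
      congr_fun hg ⟨P, hP⟩
  simpa [Nat.card_fun] using Nat.card_le_card_of_injective ψ hψ

end Counting

/-- Let `k` be a formally real pythagorean field with `k^×/(k^×)²` finite of order `2^n`.
Then the number of orderings `x(k)` of `k` satisfies `n ≤ x(k) ≤ 2^(n-1)`. -/
theorem stmt_1 {k : Type} [Field k] (n : ℕ)
    (hreal : ¬ IsSumSq (-1 : k))
    (hpyth : ∀ a b : k, ∃ c : k, a ^ 2 + b ^ 2 = c ^ 2)
    (hcard : Nat.card (kˣ ⧸ (powMonoidHom 2 : kˣ →* kˣ).range) = 2 ^ n) :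
    n ≤ Nat.card {P : Set k // IsFieldOrdering P} ∧
      Nat.card {P : Set k // IsFieldOrdering P} ≤ 2 ^ (n - 1) := by
  replace hcard : Nat.card (SquareClass k) = 2 ^ n := hcard
  have : Finite (SquareClass k) := Nat.finite_of_card_ne_zero (by rw [hcard]; positivity)
  have hlower := card_squareClass_le_two_pow_card_isFieldOrdering hreal hpyth
  have hupper := two_mul_card_isFieldOrdering_le hreal
  rw [hcard] at hlower hupper
  refine ⟨(Nat.pow_le_pow_iff_right one_lt_two).1 hlower, ?_⟩
  rcases n with _ | n
  · norm_num at hupper ⊢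
    omega
  · rw [pow_succ'] at hupper
    simpa using hupper
end

section
/- Let L be an algebraically closed field and let k ⊆ L be a subfield with [L : k] = 2. Then k has characteristic 0, k is real closed, and L = k(√−1). -/
/-!
Since `[L : k] = 2`, every element of `L` is `a + b x` for a fixed `x ∉ k`, so each use of
algebraic closedness (a square root, or a root of a quadratic, taken in `L`) turns into a pair of
equations over `k` by comparing coefficients. In characteristic two this is contradictory both for
a purely inseparable and for an Artin–Schreier generator. Otherwise `L = k(γ)` with `γ ^ 2 = d ∈ k`;
expanding `√γ` in the basis `1, γ` shows that `-d` is a square, hence `-1` is not, and `L = k(i)`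
with `i ^ 2 = -1`. Square roots of `a + b i` show that sums of squares in `k` are squares, so `-1`
is not a sum of squares and `k` has characteristic zero; square roots of `x ∈ k` show that `x` or
`-x` is a square. A root in `L` of an odd-degree polynomial over `k` has a minimal polynomial of
degree one or two; in the second case divide it out and induct on the degree.
-/

/-- A field `k` is real closed if `-1` is not a square in `k`, every element of `k` is a
square or the negative of a square, and every polynomial of odd degree over `k` has a
root in `k`. -/
def IsRealClosedField (k : Type) [Field k] : Prop :=
  ¬ IsSquare (-1 : k) ∧ (∀ x : k, IsSquare x ∨ IsSquare (-x)) ∧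
    ∀ p : Polynomial k, Odd p.natDegree → ∃ x : k, p.eval x = 0

open Module
open scoped algebraMap

section Coordinates

variable {k L : Type*} [Field k] [Field L] [Algebra k L]

theorem exists_notMem_range_algebraMap (h : 1 < finrank k L) :
    ∃ x : L, x ∉ Set.range (algebraMap k L) := by
  by_contra! hall
  have : (⊥ : IntermediateField k L) = ⊤ :=
    eq_top_iff.2 fun x _ => IntermediateField.mem_bot.2 (hall x)
  rw [IntermediateField.bot_eq_top_iff_finrank_eq_one] at this
  omega

theorem linearIndependent_one_of_notMem_range {x : L} (hx : x ∉ Set.range (algebraMap k L)) :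
    LinearIndependent k ![1, x] :=
  (LinearIndependent.pair_iff' one_ne_zero).2 fun a ha =>
    hx ⟨a, by rwa [Algebra.algebraMap_eq_smul_one]⟩

theorem algebraMap_add_mul_inj {x : L} (hx : x ∉ Set.range (algebraMap k L)) {a b a' b' : k}
    (h : (a : L) + b * x = a' + b' * x) : a = a' ∧ b = b' := by
  have hsub : (a - a') • (1 : L) + (b - b') • x = 0 := by
    simp only [Algebra.smul_def, map_sub, mul_one]
    linear_combination h
  have hli := linearIndependent_one_of_notMem_range (k := k) hx
  rw [LinearIndependent.pair_iff] at hli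
  have := hli _ _ hsub
  exact ⟨sub_eq_zero.1 this.1, sub_eq_zero.1 this.2⟩

theorem exists_algebraMap_add_mul_eq (hdeg : finrank k L = 2) {x : L}
    (hx : x ∉ Set.range (algebraMap k L)) (y : L) : ∃ a b : k, (a : L) + b * x = y := by
  have hspan := (linearIndependent_one_of_notMem_range hx).span_eq_top_of_card_eq_finrank
    (by simp [hdeg])
  have hy : y ∈ Submodule.span k (Set.range ![1, x]) := hspan ▸ Submodule.mem_top
  rw [Matrix.range_cons_cons_empty, Submodule.mem_span_pair] at hy
  obtain ⟨a, b, rfl⟩ := hy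
  exact ⟨a, b, by rw [Algebra.smul_def, Algebra.smul_def, mul_one]⟩

theorem adjoin_simple_eq_top_of_notMem_range (hdeg : finrank k L = 2) {x : L}
    (hx : x ∉ Set.range (algebraMap k L)) : IntermediateField.adjoin k {x} = ⊤ := by
  have := IntermediateField.isSimpleOrder_of_finrank_prime k L (hdeg ▸ Nat.prime_two)
  refine (eq_bot_or_eq_top _).resolve_left fun hbot => hx ?_
  exact IntermediateField.mem_bot.1 (IntermediateField.adjoin_simple_eq_bot_iff.1 hbot)

end Coordinates

open Polynomial in
theorem IsAlgClosed.exists_sq_eq_self_add {L : Type*} [Field L] [IsAlgClosed L] (c : L) :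
    ∃ z : L, z ^ 2 = z + c := by
  have hdeg : (C 1 * X ^ 2 + C (-1) * X + C (-c)).degree ≠ 0 := by
    rw [degree_quadratic one_ne_zero]
    decide
  obtain ⟨z, hz⟩ := IsAlgClosed.exists_root _ hdeg
  exact ⟨z, by linear_combination (by simpa using hz : z ^ 2 + -z + -c = 0)⟩

section CharTwo

variable {k L : Type*} [Field k] [Field L] [Algebra k L] [IsAlgClosed L]

theorem sq_notMem_range_of_two_eq_zero (h2 : (2 : k) = 0) (hdeg : finrank k L = 2) {α : L}
    (hα : α ∉ Set.range (algebraMap k L)) : α ^ 2 ∉ Set.range (algebraMap k L) := by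
  rintro ⟨c, hc⟩
  have h2L : (2 : L) = 0 := by rw [← map_ofNat (algebraMap k L) 2, h2, map_zero]
  obtain ⟨β, hβ⟩ := IsAlgClosed.exists_pow_nat_eq α two_pos
  obtain ⟨u, v, rfl⟩ := exists_algebraMap_add_mul_eq hdeg hα β
  -- squaring is additive in characteristic two, so `β ^ 2 = α` would lie in `k`
  exact hα ⟨u ^ 2 + v ^ 2 * c, by
    push_cast
    linear_combination (↑v ^ 2 : L) * hc + hβ - (↑u * ↑v * α) * h2L⟩

theorem sq_ne_self_add_of_two_eq_zero (h2 : (2 : k) = 0) (hdeg : finrank k L = 2) {α : L}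
    (hα : α ∉ Set.range (algebraMap k L)) (a : k) : α ^ 2 ≠ α + a := by
  intro hα2
  have h2L : (2 : L) = 0 := by rw [← map_ofNat (algebraMap k L) 2, h2, map_zero]
  -- a root `u + v α` of `β ^ 2 = β + a α` gives `v ^ 2 = v + a`, making `α - v` idempotent
  obtain ⟨β, hβ⟩ := IsAlgClosed.exists_sq_eq_self_add (a * α)
  obtain ⟨u, v, rfl⟩ := exists_algebraMap_add_mul_eq hdeg hα β
  obtain ⟨-, hv⟩ := algebraMap_add_mul_inj hα (a := u ^ 2 + v ^ 2 * a - u)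
    (b := 2 * u * v + v ^ 2 - v - a) (a' := 0) (b' := 0) (by
      push_cast [map_ofNat]
      linear_combination hβ - (↑v ^ 2 : L) * hα2)
  have hv : v ^ 2 = v + a := by linear_combination hv - u * v * h2
  have hδ : (α - v) * (α - v - 1) = 0 := by
    linear_combination hα2 + (by exact_mod_cast congrArg (algebraMap k L) hv : (v : L) ^ 2 = v + a)
      + (↑v + ↑a - ↑v * α) * h2L
  rcases mul_eq_zero.1 hδ with h | h
  · exact hα ⟨v, by linear_combination -h⟩
  · exact hα ⟨v + 1, by push_cast; linear_combination -h⟩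

theorem two_ne_zero_of_finrank_eq_two (hdeg : finrank k L = 2) : (2 : k) ≠ 0 := by
  intro h2
  obtain ⟨α, hα⟩ := exists_notMem_range_algebraMap (k := k) (L := L) (by omega)
  obtain ⟨c, b, hcb⟩ := exists_algebraMap_add_mul_eq hdeg hα (α ^ 2)
  -- `α ^ 2 = c + b α`: purely inseparable if `b = 0`, else `α / b` is an Artin–Schreier root
  rcases eq_or_ne b 0 with rfl | hb
  · exact sq_notMem_range_of_two_eq_zero h2 hdeg hα ⟨c, by simpa using hcb⟩
  · have hbL : (b : L) ≠ 0 := by exact_mod_cast hb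
    refine sq_ne_self_add_of_two_eq_zero h2 hdeg (α := α / b) ?_ (c / b ^ 2) ?_
    · rintro ⟨u, hu⟩
      exact hα ⟨u * b, by rw [map_mul]; exact ((div_eq_iff hbL).1 hu.symm).symm⟩
    · push_cast
      field_simp
      linear_combination -hcb

end CharTwo

section Square

variable {k L : Type*} [Field k] [Field L] [Algebra k L]

theorem exists_sq_eq_algebraMap_notMem_range (h2 : (2 : k) ≠ 0) (hdeg : finrank k L = 2) :
    ∃ γ ∉ Set.range (algebraMap k L), ∃ d : k, γ ^ 2 = d := by
  obtain ⟨α, hα⟩ := exists_notMem_range_algebraMap (k := k) (L := L) (by omega)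
  obtain ⟨c, b, hcb⟩ := exists_algebraMap_add_mul_eq hdeg hα (α ^ 2)
  have h2L : (2 : L) ≠ 0 := by rw [← map_ofNat (algebraMap k L) 2]; exact (map_ne_zero _).2 h2
  refine ⟨2 * α - b, fun ⟨u, hu⟩ => hα ⟨(u + b) / 2, ?_⟩, 4 * c + b ^ 2, ?_⟩
  · rw [map_div₀, map_add, hu, map_ofNat]
    field_simp
    ring
  · push_cast [map_ofNat]
    linear_combination -4 * hcb

variable [IsAlgClosed L]

theorem isSquare_neg_of_sq_eq_algebraMap (hdeg : finrank k L = 2) {γ : L}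
    (hγ : γ ∉ Set.range (algebraMap k L)) {d : k} (hd : γ ^ 2 = d) : IsSquare (-d) := by
  obtain ⟨β, hβ⟩ := IsAlgClosed.exists_pow_nat_eq γ two_pos
  obtain ⟨p, q, rfl⟩ := exists_algebraMap_add_mul_eq hdeg hγ β
  -- `(p + q γ) ^ 2 = γ` forces `p ^ 2 + q ^ 2 d = 0` and `2 p q = 1`
  obtain ⟨hpq, hpq'⟩ := algebraMap_add_mul_inj hγ (a := p ^ 2 + q ^ 2 * d) (b := 2 * p * q)
    (a' := 0) (b' := 1) (by
      push_cast [map_ofNat]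
      linear_combination hβ - (↑q ^ 2 : L) * hd)
  have hq : q ≠ 0 := by rintro rfl; simp at hpq'
  exact ⟨p / q, by field_simp; linear_combination -hpq⟩

theorem not_isSquare_neg_one_of_finrank_eq_two (hdeg : finrank k L = 2) :
    ¬ IsSquare (-1 : k) := by
  rintro ⟨j, hj⟩
  obtain ⟨γ, hγ, d, hd⟩ :=
    exists_sq_eq_algebraMap_notMem_range (two_ne_zero_of_finrank_eq_two hdeg) hdeg
  obtain ⟨e, he⟩ := isSquare_neg_of_sq_eq_algebraMap hdeg hγ hd
  have hγ2 : γ ^ 2 = (↑(j * e) : L) ^ 2 := by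
    rw [hd, ← map_pow]
    congr 1
    linear_combination -he + e ^ 2 * hj
  rcases sq_eq_sq_iff_eq_or_eq_neg.1 hγ2 with h | h
  · exact hγ ⟨j * e, h.symm⟩
  · exact hγ ⟨-(j * e), by rw [map_neg, h]⟩

theorem exists_sq_eq_neg_one_notMem_range (hdeg : finrank k L = 2) :
    ∃ i : L, i ^ 2 = -1 ∧ i ∉ Set.range (algebraMap k L) := by
  obtain ⟨i, hi⟩ := IsAlgClosed.exists_pow_nat_eq (-1 : L) two_pos
  refine ⟨i, hi, fun ⟨j, hj⟩ => not_isSquare_neg_one_of_finrank_eq_two hdeg ⟨j, ?_⟩⟩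
  apply (algebraMap k L).injective
  rw [map_mul, hj, ← sq, hi, map_neg, map_one]

end Square

section ImaginaryUnit

variable {k L : Type*} [Field k] [Field L] [Algebra k L] [IsAlgClosed L]

theorem isSquare_or_isSquare_neg_of_sq_eq_neg_one (hdeg : finrank k L = 2) {i : L}
    (hi : i ^ 2 = -1) (hik : i ∉ Set.range (algebraMap k L)) (h2 : (2 : k) ≠ 0) (x : k) :
    IsSquare x ∨ IsSquare (-x) := by
  obtain ⟨s, hs⟩ := IsAlgClosed.exists_pow_nat_eq (x : L) two_pos
  obtain ⟨p, q, rfl⟩ := exists_algebraMap_add_mul_eq hdeg hik s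
  obtain ⟨hre, him⟩ := algebraMap_add_mul_inj hik (a := p ^ 2 - q ^ 2) (b := 2 * p * q)
    (a' := x) (b' := 0) (by
      push_cast [map_ofNat]
      linear_combination hs - (↑q ^ 2 : L) * hi)
  rcases mul_eq_zero.1 (show p * q = 0 by simpa [h2, mul_assoc] using him) with rfl | rfl
  · exact .inr ⟨q, by linear_combination hre⟩
  · exact .inl ⟨p, by linear_combination -hre⟩

theorem IsSquare.add_of_sq_eq_neg_one (hdeg : finrank k L = 2) {i : L} (hi : i ^ 2 = -1)
    (hik : i ∉ Set.range (algebraMap k L)) {x y : k} (hx : IsSquare x) (hy : IsSquare y) :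
    IsSquare (x + y) := by
  obtain ⟨a, rfl⟩ := hx
  obtain ⟨b, rfl⟩ := hy
  obtain ⟨w, hw⟩ := IsAlgClosed.exists_pow_nat_eq ((a : L) + b * i) two_pos
  obtain ⟨u, v, rfl⟩ := exists_algebraMap_add_mul_eq hdeg hik w
  -- `(u + v i) ^ 2 = a + b i` gives `a = u ^ 2 - v ^ 2` and `b = 2 u v`
  obtain ⟨hre, him⟩ := algebraMap_add_mul_inj hik (a := u ^ 2 - v ^ 2) (b := 2 * u * v)
    (a' := a) (b' := b) (by
      push_cast [map_ofNat]
      linear_combination hw - (↑v ^ 2 : L) * hi)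
  exact ⟨u ^ 2 + v ^ 2, by rw [← hre, ← him]; ring⟩

end ImaginaryUnit

theorem isSemireal_of_isSquare_add {R : Type*} [CommRing R] (h : ¬ IsSquare (-1 : R))
    (hadd : ∀ x y : R, IsSquare x → IsSquare y → IsSquare (x + y)) : IsSemireal R := by
  suffices ∀ s : R, IsSumSq s → IsSquare s from
    IsSemireal.of_not_isSumSq_neg_one fun hsum => h (this _ hsum)
  intro s hs
  induction hs using IsSumSq.rec' with
  | zero => exact .zero
  | sq_add hx _ ih => exact hadd _ _ hx ih

open Polynomial in
theorem exists_eval_eq_zero_of_odd_natDegree {k L : Type*} [Field k] [Field L] [Algebra k L]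
    [IsAlgClosed L] (hdeg : finrank k L = 2) (p : k[X]) (hp : Odd p.natDegree) :
    ∃ x : k, p.eval x = 0 := by
  have : FiniteDimensional k L := .of_finrank_eq_succ hdeg
  induction hn : p.natDegree using Nat.strong_induction_on generalizing p with
  | _ n ih =>
  have hp0 : p.degree ≠ 0 := fun h => by
    rw [natDegree_eq_zero_iff_degree_le_zero.2 h.le] at hp
    simp at hp
  obtain ⟨x, hx⟩ := IsAlgClosed.exists_aeval_eq_zero L p hp0
  by_cases hxk : x ∈ (algebraMap k L).range
  · obtain ⟨r, rfl⟩ := hxk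
    refine ⟨r, (algebraMap k L).injective ?_⟩
    rw [aeval_algebraMap_apply, coe_aeval_eq_eval] at hx
    rw [hx, map_zero]
  -- otherwise `p = minpoly k x * q` with `minpoly k x` of degree two and `q` of odd degree
  have hm : (minpoly k x).natDegree = 2 :=
    ((minpoly.natDegree_le x).trans_eq hdeg).antisymm
      ((minpoly.two_le_natDegree_iff (.of_finite k x)).2 hxk)
  obtain ⟨q, rfl⟩ := minpoly.dvd k x hx
  have hq : q ≠ 0 := by rintro rfl; simp at hp
  rw [natDegree_mul (minpoly.ne_zero (.of_finite k x)) hq, hm] at hp hn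
  obtain ⟨y, hy⟩ := ih q.natDegree (by omega) q ((Nat.odd_add'.1 hp).2 even_two) rfl
  exact ⟨y, by rw [eval_mul, hy, mul_zero]⟩

/-- Let `L` be an algebraically closed field and `k ⊆ L` a subfield with `[L : k] = 2`.
Then `k` has characteristic 0, `k` is real closed, and `L = k(√−1)`. -/
theorem stmt_7 {k L : Type} [Field k] [Field L] [Algebra k L] [IsAlgClosed L]
    (hdeg : Module.finrank k L = 2) :
    CharZero k ∧ IsRealClosedField k ∧
      ∃ i : L, i ^ 2 = -1 ∧ IntermediateField.adjoin k {i} = ⊤ := by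
  have hneg := not_isSquare_neg_one_of_finrank_eq_two hdeg
  obtain ⟨i, hi, hik⟩ := exists_sq_eq_neg_one_notMem_range hdeg
  have : IsSemireal k :=
    isSemireal_of_isSquare_add hneg fun _ _ => IsSquare.add_of_sq_eq_neg_one hdeg hi hik
  refine ⟨inferInstance, ⟨hneg, ?_, exists_eval_eq_zero_of_odd_natDegree hdeg⟩, i, hi,
    adjoin_simple_eq_top_of_notMem_range hdeg hik⟩
  exact isSquare_or_isSquare_neg_of_sq_eq_neg_one hdeg hi hik
    (two_ne_zero_of_finrank_eq_two hdeg)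
end
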